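/- arXiv:2408.09387 — 7 statements merged into one kernel-verified Lean document; each statement's English description precedes it below -/
import Mathlib

section
/- Let n, k ≥ 1 be natural numbers and p ∈ (0,1). Define S_1(n,k,p) = Σ_{ℓ=n+k-1}^∞ ℓ(ℓ-1)⋯(ℓ-n+2) (1-p)^{ℓ-n+1} (a product of n-1 consecutive factors) and S_2(n,k,p) = Σ_{ℓ=n+k-1}^∞ ℓ(ℓ-1)⋯(ℓ-k+1) p^{ℓ-k} (a product of k consecutive factors). Then (1-p) · S_2(n,k,p) = (n+k-1)(n+k-2)⋯n · p^{n-1} + k · S_1(k,n,1-p). -/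
/-- `S_1(n,k,p) = Σ_{ℓ=n+k-1}^∞ ℓ(ℓ-1)⋯(ℓ-n+2) (1-p)^{ℓ-n+1}`: the coefficient is the
descending product of `n-1` consecutive factors starting at `ℓ`
(written via the index shift `ℓ = n+k-1+j`). -/
noncomputable def S₁ (n k : ℕ) (p : ℝ) : ℝ :=
  ∑' j : ℕ, ((n + k - 1 + j).descFactorial (n - 1) : ℝ) * (1 - p) ^ (n + k - 1 + j - n + 1)

/-- `S_2(n,k,p) = Σ_{ℓ=n+k-1}^∞ ℓ(ℓ-1)⋯(ℓ-k+1) p^{ℓ-k}`: the coefficient is the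
descending product of `k` consecutive factors starting at `ℓ`. -/
noncomputable def S₂ (n k : ℕ) (p : ℝ) : ℝ :=
  ∑' j : ℕ, ((n + k - 1 + j).descFactorial k : ℝ) * p ^ (n + k - 1 + j - k)

lemma aux_summable (m b : ℕ) {r : ℝ} (hr : |r| < 1) :
    Summable (fun j : ℕ => ((j + b + m).descFactorial m : ℝ) * r ^ (j + b)) := by
  have h := summable_descFactorial_mul_geometric_of_norm_lt_one (R := ℝ) m
    (by rwa [Real.norm_eq_abs])
  exact h.comp_injective (add_left_injective b)

lemma desc_diff (a' c : ℕ) (h : c ≤ a') :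
    ((a' + 1).descFactorial (c + 1) : ℝ) - (a'.descFactorial (c + 1) : ℝ)
      = (c + 1) * (a'.descFactorial c : ℝ) := by
  rw [Nat.succ_descFactorial_succ, Nat.descFactorial_succ]
  push_cast [h]
  ring

/-- For `n, k ≥ 1` and `p ∈ (0,1)`:
`(1-p) S_2(n,k,p) = (n+k-1)(n+k-2)⋯n · p^{n-1} + k · S_1(k,n,1-p)`,
where `(n+k-1)⋯n` is the descending product of `k` factors. -/
theorem S2_S1_relation (n k : ℕ) (hn : 1 ≤ n) (hk : 1 ≤ k)
    (p : ℝ) (hp : p ∈ Set.Ioo (0 : ℝ) 1) :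
    (1 - p) * S₂ n k p =
      ((n + k - 1).descFactorial k : ℝ) * p ^ (n - 1) + k * S₁ k n (1 - p) := by
  obtain ⟨p0, p1⟩ := hp
  obtain ⟨a, rfl⟩ : ∃ a, n = a + 1 := ⟨n - 1, (Nat.succ_pred_eq_of_pos hn).symm⟩
  obtain ⟨c, rfl⟩ : ∃ c, k = c + 1 := ⟨k - 1, (Nat.succ_pred_eq_of_pos hk).symm⟩
  have hpabs : |p| < 1 := abs_lt.2 ⟨by linarith, p1⟩
  set F : ℕ → ℝ := fun j => ((j + a + (c + 1)).descFactorial (c + 1) : ℝ) * p ^ (j + a) with hFdef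
  set G : ℕ → ℝ := fun j => ((j + (a + 1) + c).descFactorial c : ℝ) * p ^ (j + (a + 1)) with hGdef
  have hF : Summable F := aux_summable (c + 1) a hpabs
  have hG : Summable G := aux_summable c (a + 1) hpabs
  have hF1 : Summable (fun j => F (j + 1)) := (summable_nat_add_iff 1).2 hF
  have hH : Summable (fun j => p * F j) := hF.mul_left p
  have hS2 : S₂ (a + 1) (c + 1) p = ∑' j, F j := by
    unfold S₂
    congr 1; funext j
    rw [show a + 1 + (c + 1) - 1 + j = j + a + (c + 1) from by omega,
      show j + a + (c + 1) - (c + 1) = j + a from by omega]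
  have hS1 : S₁ (c + 1) (a + 1) (1 - p) = ∑' j, G j := by
    unfold S₁
    congr 1; funext j
    rw [sub_sub_cancel, Nat.add_sub_cancel,
      show c + 1 + (a + 1) - 1 + j = j + (a + 1) + c from by omega,
      show j + (a + 1) + c - (c + 1) + 1 = j + (a + 1) from by omega]
  have key : ∀ j : ℕ, F (j + 1) - p * F j = (c + 1 : ℝ) * G j := by
    intro j
    have hd := desc_diff (j + a + (c + 1)) c (by omega)
    simp only [hFdef, hGdef,
      show j + 1 + a = j + a + 1 from by omega,
      show j + a + 1 + (c + 1) = j + a + (c + 1) + 1 from by omega,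
      show j + (a + 1) = j + a + 1 from by omega,
      show j + a + 1 + c = j + a + (c + 1) from by omega, pow_succ]
    linear_combination (p ^ (j + a) * p) * hd
  calc (1 - p) * S₂ (a + 1) (c + 1) p
      = (∑' j, F j) - ∑' j, p * F j := by
        rw [hS2, sub_mul, one_mul, tsum_mul_left]
    _ = (F 0 + ∑' j, F (j + 1)) - ∑' j, p * F j := by rw [Summable.tsum_eq_zero_add hF]
    _ = F 0 + ∑' j, (F (j + 1) - p * F j) := by
        rw [Summable.tsum_sub hF1 hH]; ring
    _ = F 0 + ∑' j, (c + 1 : ℝ) * G j := by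
        congr 1; exact tsum_congr key
    _ = F 0 + (c + 1 : ℝ) * ∑' j, G j := by rw [tsum_mul_left]
    _ = ((a + 1 + (c + 1) - 1).descFactorial (c + 1) : ℝ) * p ^ (a + 1 - 1)
        + (↑(c + 1)) * S₁ (c + 1) (a + 1) (1 - p) := by
        rw [hS1]
        simp only [hFdef]
        rw [show a + 1 + (c + 1) - 1 = 0 + a + (c + 1) from by omega,
          show a + 1 - 1 = 0 + a from by omega]
        push_cast
        ring
end

section
/- Let n, k ≥ 1 be natural numbers and p ∈ (0,1). Define the average number of boys under the (n,k,p)-rule by B(n,k,p) = Σ_{ℓ=n+k-1}^∞ n C(ℓ, n-1) p^n (1-p)^{ℓ+1-n} + Σ_{ℓ=n+k-1}^∞ (ℓ+1-k) C(ℓ, k-1) p^{ℓ+1-k} (1-p)^k. Then (1-p) · B(n,k,p) = p · B(k,n,1-p). -/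
open Filter Finset

/-- The average number of boys under the `(n,k,p)`-rule:
`B(n,k,p) = Σ_{ℓ=n+k-1}^∞ n C(ℓ,n-1) p^n (1-p)^{ℓ+1-n}
          + Σ_{ℓ=n+k-1}^∞ (ℓ+1-k) C(ℓ,k-1) p^{ℓ+1-k} (1-p)^k`
(written via the index shift `ℓ = n+k-1+j`). -/
noncomputable def avgBoys (n k : ℕ) (p : ℝ) : ℝ :=
  (∑' j : ℕ, (n : ℝ) * ((n + k - 1 + j).choose (n - 1) : ℝ) *
      p ^ n * (1 - p) ^ (n + k - 1 + j + 1 - n)) +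
  ∑' j : ℕ, ((n + k - 1 + j + 1 - k : ℕ) : ℝ) * ((n + k - 1 + j).choose (k - 1) : ℝ) *
      p ^ (n + k - 1 + j + 1 - k) * (1 - p) ^ k


lemma nat_key (c b : ℕ) : (c + 1) * Nat.choose c b = (c + 1 - b) * Nat.choose (c + 1) b := by
  rw [Nat.add_one_mul_choose_eq, Nat.choose_succ_right_eq, mul_comm]

lemma aux_poly_geom (N c : ℕ) {x : ℝ} (hx0 : 0 < x) (hx1 : x < 1) :
    Summable (fun j : ℕ => ((c + j : ℕ) : ℝ) ^ N * x ^ j) := by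
  have h : Summable (fun j : ℕ => (j : ℝ) ^ N * x ^ j) :=
    summable_pow_mul_geometric_of_norm_lt_one N
      (by rw [Real.norm_eq_abs, abs_of_pos hx0]; exact hx1)
  have h2 : Summable (fun j : ℕ => ((j + c : ℕ) : ℝ) ^ N * x ^ (j + c)) :=
    (summable_nat_add_iff c).2 h
  have hx : (x : ℝ) ^ c ≠ 0 := pow_ne_zero _ hx0.ne'
  refine (h2.mul_left ((x ^ c)⁻¹)).congr fun j => ?_
  have hc : ((j + c : ℕ) : ℝ) = ((c + j : ℕ) : ℝ) := by norm_cast; omega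
  rw [hc, pow_add]
  field_simp

lemma summable_shape (a m t b : ℕ) {y x : ℝ} (hy : 0 ≤ y) (hx0 : 0 < x) (hx1 : x < 1) :
    Summable (fun j : ℕ => ((a + j : ℕ) : ℝ) * ((m + j).choose t : ℝ) * x ^ (b + j) * y) := by
  refine Summable.of_nonneg_of_le (fun j => by positivity)
    (fun j => ?_) (((aux_poly_geom (t + 1) (a + m + 1) hx0 hx1).mul_right (x ^ b * y)))
  have hnat : (a + j) * ((m + j).choose t) ≤ (a + m + 1 + j) ^ (t + 1) := by
    calc (a + j) * ((m + j).choose t) ≤ (a + m + 1 + j) * (m + j) ^ t :=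
          Nat.mul_le_mul (by omega) (Nat.choose_le_pow _ _)
      _ ≤ (a + m + 1 + j) * (a + m + 1 + j) ^ t :=
          Nat.mul_le_mul_left _ (Nat.pow_le_pow_left (by omega) t)
      _ = (a + m + 1 + j) ^ (t + 1) := by rw [pow_succ, mul_comm]
  calc ((a + j : ℕ) : ℝ) * ((m + j).choose t : ℝ) * x ^ (b + j) * y
      = (((a + j) * ((m + j).choose t) : ℕ) : ℝ) * (x ^ (b + j) * y) := by push_cast; ring
    _ ≤ (((a + m + 1 + j) ^ (t + 1) : ℕ) : ℝ) * (x ^ (b + j) * y) := by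
        apply mul_le_mul_of_nonneg_right (by exact_mod_cast hnat) (by positivity)
    _ = ((a + m + 1 + j : ℕ) : ℝ) ^ (t + 1) * x ^ j * (x ^ b * y) := by
        push_cast; rw [pow_add]; ring

lemma core (n k : ℕ) (hn : 1 ≤ n) (hk : 1 ≤ k) (p : ℝ) (hp0 : 0 < p) (hp1 : p < 1) :
    (1 - p) * ((∑' j : ℕ, (n : ℝ) * ((n + k - 1 + j).choose (n - 1) : ℝ) * p ^ n * (1 - p) ^ (k + j)) +
        ∑' j : ℕ, ((n + j : ℕ) : ℝ) * ((n + k - 1 + j).choose (k - 1) : ℝ) * p ^ (n + j) * (1 - p) ^ k)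
    = p * ((∑' j : ℕ, (k : ℝ) * ((n + k - 1 + j).choose (k - 1) : ℝ) * (1 - p) ^ k * p ^ (n + j)) +
        ∑' j : ℕ, ((k + j : ℕ) : ℝ) * ((n + k - 1 + j).choose (n - 1) : ℝ) * (1 - p) ^ (k + j) * p ^ n) := by
  have hq0 : (0 : ℝ) < 1 - p := by linarith
  have hq1 : 1 - p < 1 := by linarith
  set f1 : ℕ → ℝ := fun j => (n : ℝ) * ((n + k - 1 + j).choose (n - 1) : ℝ) * p ^ n * (1 - p) ^ (k + j) with hf1
  set f2 : ℕ → ℝ := fun j => ((n + j : ℕ) : ℝ) * ((n + k - 1 + j).choose (k - 1) : ℝ) * p ^ (n + j) * (1 - p) ^ k with hf2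
  set f3 : ℕ → ℝ := fun j => (k : ℝ) * ((n + k - 1 + j).choose (k - 1) : ℝ) * (1 - p) ^ k * p ^ (n + j) with hf3
  set f4 : ℕ → ℝ := fun j => ((k + j : ℕ) : ℝ) * ((n + k - 1 + j).choose (n - 1) : ℝ) * (1 - p) ^ (k + j) * p ^ n with hf4
  have S4 : Summable f4 := by
    refine (summable_shape k (n + k - 1) (n - 1) k (y := p ^ n) (by positivity) hq0 hq1).congr fun j => ?_
    simp only [hf4]
  have S2 : Summable f2 := by
    refine (summable_shape n (n + k - 1) (k - 1) n (y := (1 - p) ^ k) (by positivity) hp0 hp1).congr fun j => ?_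
    simp only [hf2]
  have S1 : Summable f1 := by
    refine Summable.of_nonneg_of_le (fun j => by simp only [hf1]; positivity) (fun j => ?_)
      (summable_shape n (n + k - 1) (n - 1) k (y := p ^ n) (by positivity) hq0 hq1)
    simp only [hf1]
    calc (n : ℝ) * ((n + k - 1 + j).choose (n - 1) : ℝ) * p ^ n * (1 - p) ^ (k + j)
        = (n : ℝ) * (((n + k - 1 + j).choose (n - 1) : ℝ) * (1 - p) ^ (k + j) * p ^ n) := by ring
      _ ≤ ((n + j : ℕ) : ℝ) * (((n + k - 1 + j).choose (n - 1) : ℝ) * (1 - p) ^ (k + j) * p ^ n) := by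
          apply mul_le_mul_of_nonneg_right (by exact_mod_cast Nat.le_add_right n j) (by positivity)
      _ = ((n + j : ℕ) : ℝ) * ((n + k - 1 + j).choose (n - 1) : ℝ) * (1 - p) ^ (k + j) * p ^ n := by ring
  have S3 : Summable f3 := by
    refine Summable.of_nonneg_of_le (fun j => by simp only [hf3]; positivity) (fun j => ?_)
      (summable_shape k (n + k - 1) (k - 1) n (y := (1 - p) ^ k) (by positivity) hp0 hp1)
    simp only [hf3]
    calc (k : ℝ) * ((n + k - 1 + j).choose (k - 1) : ℝ) * (1 - p) ^ k * p ^ (n + j)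
        = (k : ℝ) * (((n + k - 1 + j).choose (k - 1) : ℝ) * p ^ (n + j) * (1 - p) ^ k) := by ring
      _ ≤ ((k + j : ℕ) : ℝ) * (((n + k - 1 + j).choose (k - 1) : ℝ) * p ^ (n + j) * (1 - p) ^ k) := by
          apply mul_le_mul_of_nonneg_right (by exact_mod_cast Nat.le_add_right k j) (by positivity)
      _ = ((k + j : ℕ) : ℝ) * ((n + k - 1 + j).choose (k - 1) : ℝ) * p ^ (n + j) * (1 - p) ^ k := by ring
  set g : ℕ → ℝ := fun j => f4 j - f2 j with hg
  have hkey : ∀ j : ℕ, (1 - p) * f1 j + (1 - p) * f2 j - (p * f3 j + p * f4 j) = g (j + 1) - g j := by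
    intro j
    have hA : (k + j + 1) * Nat.choose (n + k + j) (n - 1)
        = (n + k + j) * Nat.choose (n + k - 1 + j) (n - 1) := by
      have h := nat_key (n + k - 1 + j) (n - 1)
      have e1 : n + k - 1 + j + 1 - (n - 1) = k + j + 1 := by omega
      have e2 : n + k - 1 + j + 1 = n + k + j := by omega
      rw [e1, e2] at h
      exact h.symm
    have hB : (n + j + 1) * Nat.choose (n + k + j) (k - 1)
        = (n + k + j) * Nat.choose (n + k - 1 + j) (k - 1) := by
      have h := nat_key (n + k - 1 + j) (k - 1)
      have e1 : n + k - 1 + j + 1 - (k - 1) = n + j + 1 := by omega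
      have e2 : n + k - 1 + j + 1 = n + k + j := by omega
      rw [e1, e2] at h
      exact h.symm
    have earg : n + k - 1 + (j + 1) = n + k + j := by omega
    have hA' : ((k + (j + 1) : ℕ) : ℝ) * ((n + k - 1 + (j + 1)).choose (n - 1) : ℝ)
        = ((n + k + j : ℕ) : ℝ) * ((n + k - 1 + j).choose (n - 1) : ℝ) := by
      rw [earg]; exact_mod_cast congrArg (Nat.cast (R := ℝ)) hA
    have hB' : ((n + (j + 1) : ℕ) : ℝ) * ((n + k - 1 + (j + 1)).choose (k - 1) : ℝ)
        = ((n + k + j : ℕ) : ℝ) * ((n + k - 1 + j).choose (k - 1) : ℝ) := by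
      rw [earg]; exact_mod_cast congrArg (Nat.cast (R := ℝ)) hB
    have ep : p ^ (n + (j + 1)) = p ^ (n + j) * p := by
      rw [show n + (j + 1) = (n + j) + 1 by omega, pow_succ]
    have eq' : (1 - p) ^ (k + (j + 1)) = (1 - p) ^ (k + j) * (1 - p) := by
      rw [show k + (j + 1) = (k + j) + 1 by omega, pow_succ]
    simp only [hg, hf1, hf2, hf3, hf4]
    rw [hA', hB', ep, eq']
    push_cast
    ring
  have hg0 : g 0 = 0 := by
    have m1 : 1 ≤ n + k - 1 := by omega
    have hsym : Nat.choose (n + k - 1 - 1) (n - 1) = Nat.choose (n + k - 1 - 1) (k - 1) := by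
      have h1 : k - 1 ≤ n + k - 1 - 1 := by omega
      have h2 : n + k - 1 - 1 - (k - 1) = n - 1 := by omega
      rw [← h2, Nat.choose_symm h1]
    have hA : k * Nat.choose (n + k - 1) (n - 1)
        = n * Nat.choose (n + k - 1) (k - 1) := by
      have h1 := nat_key (n + k - 1 - 1) (n - 1)
      have h2 := nat_key (n + k - 1 - 1) (k - 1)
      have e : n + k - 1 - 1 + 1 = n + k - 1 := by omega
      rw [e] at h1 h2
      rw [show n + k - 1 - (n - 1) = k by omega] at h1
      rw [show n + k - 1 - (k - 1) = n by omega] at h2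
      rw [← h1, ← h2, hsym]
    simp only [hg, hf2, hf4, Nat.add_zero]
    have hA' : ((k : ℕ) : ℝ) * (((n + k - 1).choose (n - 1) : ℕ) : ℝ)
        = ((n : ℕ) : ℝ) * (((n + k - 1).choose (k - 1) : ℕ) : ℝ) := by
      exact_mod_cast congrArg (Nat.cast (R := ℝ)) hA
    rw [← hA']
    ring
  have hgsum : Summable (fun j => g (j + 1) - g j) :=
    ((summable_nat_add_iff 1).2 (S4.sub S2)).sub (S4.sub S2)
  have hgt : Tendsto g atTop (nhds 0) := by
    have h := (S4.tendsto_atTop_zero).sub (S2.tendsto_atTop_zero)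
    rw [sub_zero] at h
    exact h
  have hsum0 : HasSum (fun j => g (j + 1) - g j) 0 := by
    rw [hgsum.hasSum_iff_tendsto_nat]
    have he : ∀ J : ℕ, ∑ i ∈ Finset.range J, (g (i + 1) - g i) = g J - g 0 := fun J =>
      Finset.sum_range_sub g J
    simp only [he, hg0, sub_zero]
    exact hgt
  have h1 := (S1.hasSum.mul_left (1 - p)).add (S2.hasSum.mul_left (1 - p))
  have h2 := (S3.hasSum.mul_left p).add (S4.hasSum.mul_left p)
  have h3 := h1.sub h2
  simp only [hkey] at h3
  have h0 := h3.unique hsum0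
  linear_combination h0

/-- For `n, k ≥ 1` and `p ∈ (0,1)`: `(1-p) · B(n,k,p) = p · B(k,n,1-p)`. -/
theorem boys_symmetry (n k : ℕ) (hn : 1 ≤ n) (hk : 1 ≤ k)
    (p : ℝ) (hp : p ∈ Set.Ioo (0 : ℝ) 1) :
    (1 - p) * avgBoys n k p = p * avgBoys k n (1 - p) := by
  obtain ⟨hp0, hp1⟩ := hp
  have h := core n k hn hk p hp0 hp1
  have e1 : avgBoys n k p
      = (∑' j : ℕ, (n : ℝ) * ((n + k - 1 + j).choose (n - 1) : ℝ) * p ^ n * (1 - p) ^ (k + j)) +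
        ∑' j : ℕ, ((n + j : ℕ) : ℝ) * ((n + k - 1 + j).choose (k - 1) : ℝ) * p ^ (n + j) * (1 - p) ^ k := by
    unfold avgBoys
    congr 1
    · exact tsum_congr fun j => by rw [show n + k - 1 + j + 1 - n = k + j by omega]
    · exact tsum_congr fun j => by rw [show n + k - 1 + j + 1 - k = n + j by omega]
  have e2 : avgBoys k n (1 - p)
      = (∑' j : ℕ, (k : ℝ) * ((n + k - 1 + j).choose (k - 1) : ℝ) * (1 - p) ^ k * p ^ (n + j)) +
        ∑' j : ℕ, ((k + j : ℕ) : ℝ) * ((n + k - 1 + j).choose (n - 1) : ℝ) * (1 - p) ^ (k + j) * p ^ n := by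
    unfold avgBoys
    congr 1
    · exact tsum_congr fun j => by
        rw [show k + n - 1 + j = n + k - 1 + j by omega,
          show n + k - 1 + j + 1 - k = n + j by omega, sub_sub_cancel]
    · exact tsum_congr fun j => by
        rw [show k + n - 1 + j = n + k - 1 + j by omega,
          show n + k - 1 + j + 1 - n = k + j by omega, sub_sub_cancel]
  rw [e1, e2]
  exact h
end

section
/- (Main Theorem) Let n, k ≥ 1 be natural numbers and p ∈ (0,1). Define B(n,k,p) = Σ_{ℓ=n+k-1}^∞ n C(ℓ, n-1) p^n (1-p)^{ℓ+1-n} + Σ_{ℓ=n+k-1}^∞ (ℓ+1-k) C(ℓ, k-1) p^{ℓ+1-k} (1-p)^k and the average number of girls G(n,k,p) = B(k,n,1-p). Then the gender ratio equals the birth odds: B(n,k,p)/G(n,k,p) = p/(1-p). -/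
open Filter

private lemma tsum_telescope' {u : ℕ → ℝ} (hu : Summable u) :
    ∑' j : ℕ, (u (j+1) - u j) = - u 0 := by
  have h1 : Summable fun j => u (j+1) := (summable_nat_add_iff 1).2 hu
  have hs : Summable fun j => u (j+1) - u j := h1.sub hu
  have ht := hs.hasSum.tendsto_sum_nat
  have hps : ∀ N, ∑ j ∈ Finset.range N, (u (j+1) - u j) = u N - u 0 :=
    fun N => Finset.sum_range_sub u N
  simp only [hps] at ht
  have h0 : Tendsto (fun N => u N - u 0) atTop (nhds (0 - u 0)) :=
    (hu.tendsto_atTop_zero).sub_const (u 0)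
  simpa using tendsto_nhds_unique ht h0

private lemma summable_choose_geom (m c : ℕ) {x : ℝ} (hx : |x| < 1) :
    Summable fun j : ℕ => ((m + j).choose c : ℝ) * x ^ j := by
  apply Summable.of_norm
  apply summable_norm_mul_geometric_of_norm_lt_one (k := c) (u := fun j => (m + j).choose c)
    (by simpa using hx)
  rw [Asymptotics.isBigO_iff]
  refine ⟨((m+1):ℝ)^c, ?_⟩
  filter_upwards [Filter.eventually_ge_atTop 1] with j hj
  have h1 : (m + j).choose c ≤ (m+j)^c := Nat.choose_le_pow (m+j) c
  have h2 : (m+j)^c ≤ ((m+1)*j)^c := Nat.pow_le_pow_left (by nlinarith) c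
  rw [Real.norm_eq_abs, Real.norm_eq_abs, abs_of_nonneg (by positivity),
    abs_of_nonneg (by positivity)]
  exact_mod_cast h1.trans (h2.trans_eq (Nat.mul_pow _ _ _))

private lemma choose_weight (l b : ℕ) (hb : 1 ≤ b) :
    (l + 1 - b) * l.choose (b-1) = b * l.choose b := by
  obtain ⟨B, rfl⟩ : ∃ B, b = B + 1 := ⟨b-1, by omega⟩
  have h := Nat.choose_succ_right_eq l B
  simp only [Nat.add_sub_cancel]
  rw [show l + 1 - (B+1) = l - B by omega]
  linarith [h]

private lemma E1_lemma (n k : ℕ) (hn : 1 ≤ n) (hk : 1 ≤ k) {p : ℝ} (hp0 : 0 < p) (hp1 : p < 1) :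
    (1-p) * (∑' j : ℕ, (n:ℝ) * ((n+k-1+j).choose (n-1) : ℝ) * p^n * (1-p)^(k+j))
      - p * (∑' j : ℕ, ((k:ℝ) + (j:ℝ)) * ((n+k-1+j).choose (n-1) : ℝ) * (1-p)^(k+j) * p^n)
    = -((n:ℝ) * ((n+k-1).choose n : ℝ) * p^n * (1-p)^k) := by
  have hqa : |1-p| < 1 := by rw [abs_lt]; constructor <;> linarith
  set m := n + k - 1 with hm
  have hW : ∀ j : ℕ, ((k:ℝ) + (j:ℝ)) * ((m+j).choose (n-1) : ℝ)
      = (n:ℝ) * ((m+j).choose n : ℝ) := by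
    intro j
    have h := choose_weight (m+j) n hn
    rw [show m+j+1-n = k+j by omega] at h
    exact_mod_cast h
  have hu : Summable (fun j : ℕ => ((m+j).choose n : ℝ) * p^n * (1-p)^(k+j)) := by
    apply Summable.congr ((summable_choose_geom m n hqa).mul_left (p^n * (1-p)^k))
    intro j; rw [pow_add]; ring
  have h1 : Summable (fun j : ℕ =>
      (1-p) * ((n:ℝ) * ((m+j).choose (n-1) : ℝ) * p^n * (1-p)^(k+j))) := by
    apply Summable.congr ((summable_choose_geom m (n-1) hqa).mul_left ((1-p) * n * p^n * (1-p)^k))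
    intro j; rw [pow_add]; ring
  have h2 : Summable (fun j : ℕ =>
      p * (((k:ℝ)+(j:ℝ)) * ((m+j).choose (n-1) : ℝ) * (1-p)^(k+j) * p^n)) := by
    apply Summable.congr ((summable_choose_geom m n hqa).mul_left (p * n * (1-p)^k * p^n))
    intro j
    rw [pow_add]
    linear_combination (-(p * (1-p)^k * (1-p)^j * p^n)) * hW j
  rw [← tsum_mul_left, ← tsum_mul_left, ← Summable.tsum_sub h1 h2]
  have hterm : ∀ j : ℕ,
      (1-p) * ((n:ℝ) * ((m+j).choose (n-1) : ℝ) * p^n * (1-p)^(k+j))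
        - p * (((k:ℝ)+(j:ℝ)) * ((m+j).choose (n-1) : ℝ) * (1-p)^(k+j) * p^n)
      = (n:ℝ) * ((((m+(j+1)).choose n : ℝ) * p^n * (1-p)^(k+(j+1)))
          - (((m+j).choose n : ℝ) * p^n * (1-p)^(k+j))) := by
    intro j
    have hP : ((m+(j+1)).choose n : ℝ) = ((m+j).choose n : ℝ) + ((m+j).choose (n-1) : ℝ) := by
      obtain ⟨N, rfl⟩ : ∃ N, n = N + 1 := ⟨n-1, by omega⟩
      rw [show m+(j+1) = (m+j)+1 by omega, Nat.choose_succ_succ]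
      push_cast [Nat.add_sub_cancel]
      ring
    rw [hP, show k+(j+1) = (k+j)+1 by omega, pow_succ]
    linear_combination (-(p * p^n * (1-p)^(k+j))) * hW j
  rw [tsum_congr hterm, tsum_mul_left]
  have htel := tsum_telescope' (u := fun j : ℕ => ((m+j).choose n : ℝ) * p^n * (1-p)^(k+j)) hu
  rw [htel]
  simp only [Nat.add_zero, add_zero]
  ring



/-- The average number of girls under the `(n,k,p)`-rule, by symmetry: `G(n,k,p) = B(k,n,1-p)`. -/
noncomputable def avgGirls (n k : ℕ) (p : ℝ) : ℝ := avgBoys k n (1 - p)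

/-- Main theorem: for `n, k ≥ 1` and `p ∈ (0,1)`, the gender ratio under the `(n,k,p)`-rule
equals the birth odds: `B(n,k,p)/G(n,k,p) = p/(1-p)`. -/
theorem gender_ratio_eq_birth_odds (n k : ℕ) (hn : 1 ≤ n) (hk : 1 ≤ k)
    (p : ℝ) (hp : p ∈ Set.Ioo (0 : ℝ) 1) :
    avgBoys n k p / avgGirls n k p = p / (1 - p) := by
  obtain ⟨hp0, hp1⟩ := hp
  have hq0 : (0:ℝ) < 1 - p := by linarith
  have hq1 : (1:ℝ) - p < 1 := by linarith
  have hpa : |p| < 1 := by rw [abs_lt]; constructor <;> linarith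
  have hB : avgBoys n k p =
      (∑' j : ℕ, (n:ℝ) * ((n+k-1+j).choose (n-1) : ℝ) * p^n * (1-p)^(k+j)) +
      ∑' j : ℕ, ((n:ℝ)+(j:ℝ)) * ((n+k-1+j).choose (k-1) : ℝ) * p^(n+j) * (1-p)^k := by
    unfold avgBoys
    congr 1
    · exact tsum_congr fun j => by rw [show n+k-1+j+1-n = k+j by omega]
    · exact tsum_congr fun j => by
        rw [show n+k-1+j+1-k = n+j by omega]; push_cast; ring
  have hG : avgGirls n k p =
      (∑' j : ℕ, (k:ℝ) * ((n+k-1+j).choose (k-1) : ℝ) * (1-p)^k * p^(n+j)) +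
      ∑' j : ℕ, ((k:ℝ)+(j:ℝ)) * ((n+k-1+j).choose (n-1) : ℝ) * (1-p)^(k+j) * p^n := by
    unfold avgGirls avgBoys
    congr 1
    · exact tsum_congr fun j => by
        rw [show k+n-1+j+1-k = n+j by omega, show k+n-1+j = n+k-1+j by omega, sub_sub_cancel]
    · exact tsum_congr fun j => by
        rw [show k+n-1+j+1-n = k+j by omega, show k+n-1+j = n+k-1+j by omega, sub_sub_cancel]
        push_cast; ring
  have e1 := E1_lemma n k hn hk hp0 hp1
  have e2 := E1_lemma k n hk hn hq0 hq1
  simp only [sub_sub_cancel] at e2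
  rw [show k+n-1 = n+k-1 by omega] at e2
  have hXY : (n:ℝ) * ((n+k-1).choose n : ℝ) * p^n * (1-p)^k
      = (k:ℝ) * ((n+k-1).choose k : ℝ) * (1-p)^k * p^n := by
    have h2 := choose_weight (n+k-1) n hn
    rw [show n+k-1+1-n = k by omega] at h2
    have h3 : (n+k-1).choose (n-1) = (n+k-1).choose k := by
      rw [show n-1 = n+k-1-k by omega]
      exact Nat.choose_symm (by omega)
    rw [h3] at h2
    have h4 : ((k:ℝ)) * ((n+k-1).choose k : ℝ) = (n:ℝ) * ((n+k-1).choose n : ℝ) := by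
      exact_mod_cast congrArg (Nat.cast : ℕ → ℝ) h2
    linear_combination (-(p^n * (1-p)^k)) * h4
  have key : (1-p) * avgBoys n k p = p * avgGirls n k p := by
    rw [hB, hG]
    linear_combination e1 - e2 - hXY
  have hGpos : 0 < avgGirls n k p := by
    rw [hG]
    have hsum1 : Summable (fun j : ℕ =>
        (k:ℝ) * ((n+k-1+j).choose (k-1) : ℝ) * (1-p)^k * p^(n+j)) := by
      apply Summable.congr ((summable_choose_geom (n+k-1) (k-1) hpa).mul_left
        ((k:ℝ)*(1-p)^k*p^n))
      intro j; rw [pow_add]; ring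
    have hnn : ∀ j : ℕ, 0 ≤ (k:ℝ) * ((n+k-1+j).choose (k-1) : ℝ) * (1-p)^k * p^(n+j) :=
      fun j => mul_nonneg (mul_nonneg (mul_nonneg (by positivity) (by positivity))
        (pow_nonneg (by linarith) k)) (by positivity)
    have h1 := Summable.le_tsum hsum1 0 (fun j _ => hnn j)
    have h2 : 0 ≤ ∑' j : ℕ, ((k:ℝ)+(j:ℝ)) * ((n+k-1+j).choose (n-1) : ℝ) * (1-p)^(k+j) * p^n :=
      tsum_nonneg fun j => mul_nonneg (mul_nonneg (mul_nonneg (by positivity) (by positivity))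
        (pow_nonneg (by linarith) (k+j))) (by positivity)
    have hc : (0:ℝ) < ((n+k-1+0).choose (k-1) : ℝ) := by
      exact_mod_cast Nat.choose_pos (show k-1 ≤ n+k-1+0 by omega)
    have h0 : (0:ℝ) < (k:ℝ) * ((n+k-1+0).choose (k-1) : ℝ) * (1-p)^k * p^(n+0) :=
      mul_pos (mul_pos (mul_pos (by exact_mod_cast hk) hc) (pow_pos hq0 k)) (pow_pos hp0 _)
    linarith
  rw [div_eq_div_iff hGpos.ne' (by linarith : (1:ℝ)-p ≠ 0)]
  linear_combination key
end

section
/- Let n, k ≥ 1 be natural numbers and p ∈ (0,1). The average number of boys B(n,k,p) = Σ_{ℓ=n+k-1}^∞ n C(ℓ, n-1) p^n (1-p)^{ℓ+1-n} + Σ_{ℓ=n+k-1}^∞ (ℓ+1-k) C(ℓ, k-1) p^{ℓ+1-k} (1-p)^k admits the closed form B(n,k,p) = (n/(n-1)!) p^n (−1)^{n-1} d^{n-1}/dp^{n-1} ( (1-p)^{n+k-1}/p ) + (p (1-p)^k/(k-1)!) d^{k}/dp^{k} ( p^{n+k-1}/(1-p) ). -/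
open Metric

theorem summable_descFactorial_mul_pow_sub {R : Type*} [NormedRing R] [HasSummableGeomSeries R]
    (N m : ℕ) {r : R} (hr : ‖r‖ < 1) :
    Summable fun j : ℕ => ((N + j).descFactorial m : R) * r ^ (N + j - m) := by
  rw [← summable_nat_add_iff m]
  have h := (summable_nat_add_iff (f := fun n : ℕ => ((n + m).descFactorial m : R) * r ^ n) N).mpr
    (summable_descFactorial_mul_geometric_of_norm_lt_one m hr)
  refine h.congr fun j => ?_
  rw [show N + (j + m) - m = j + N by omega, show N + (j + m) = j + N + m by omega]

section GeometricTail

variable {𝕜 : Type*} [RCLike 𝕜]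

theorem summableLocallyUniformlyOn_iteratedDerivWithin_pow_add (N m : ℕ) :
    SummableLocallyUniformlyOn
      (fun j => iteratedDerivWithin m (fun z : 𝕜 => z ^ (N + j)) (ball 0 1)) (ball 0 1) := by
  refine SummableLocallyUniformlyOn_of_locally_bounded isOpen_ball fun K hK hKc => ?_
  obtain ⟨r, hr, hKr⟩ := exists_pos_lt_subset_ball one_pos hKc.isClosed hK
  refine ⟨_, summable_descFactorial_mul_pow_sub N m (r := r) ?_, fun j z hz => ?_⟩
  · rw [Real.norm_of_nonneg hr.1.le]; exact hr.2
  have hz' : ‖z‖ < r := mem_ball_zero_iff.mp (hKr hz)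
  rw [iteratedDerivWithin_pow (hK hz) isOpen_ball.uniqueDiffOn, norm_mul, norm_pow,
    RCLike.norm_natCast]
  gcongr

theorem iteratedDeriv_tsum_pow_add (N m : ℕ) {x : 𝕜} (hx : ‖x‖ < 1) :
    iteratedDeriv m (fun z : 𝕜 => ∑' j, z ^ (N + j)) x =
      ∑' j, ((N + j).descFactorial m : 𝕜) * x ^ (N + j - m) := by
  have hx' : x ∈ ball (0 : 𝕜) 1 := mem_ball_zero_iff.mpr hx
  rw [← iteratedDerivWithin_of_isOpen isOpen_ball hx',
    iteratedDerivWithin_tsum m isOpen_ball hx']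
  · exact tsum_congr fun j => iteratedDerivWithin_pow hx' isOpen_ball.uniqueDiffOn _ _
  · intro t ht
    exact (summable_geometric_of_norm_lt_one (mem_ball_zero_iff.mp ht)).mul_left (t ^ N)
      |>.congr fun j => (pow_add t N j).symm
  · exact fun l _ _ => summableLocallyUniformlyOn_iteratedDerivWithin_pow_add N l
  · intro j l t _ ht
    have hpow : iteratedDerivWithin l (fun z : 𝕜 => z ^ (N + j)) (ball 0 1) =ᶠ[nhds t]
        fun z => ((N + j).descFactorial l : 𝕜) * z ^ (N + j - l) := by
      filter_upwards [isOpen_ball.mem_nhds ht] with z hz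
      exact iteratedDerivWithin_pow hz isOpen_ball.uniqueDiffOn _ _
    exact (by fun_prop : DifferentiableAt 𝕜 _ t).congr_of_eventuallyEq hpow

theorem iteratedDeriv_pow_div_one_sub (N m : ℕ) {x : 𝕜} (hx : ‖x‖ < 1) :
    iteratedDeriv m (fun z : 𝕜 => z ^ N / (1 - z)) x =
      ∑' j, ((N + j).descFactorial m : 𝕜) * x ^ (N + j - m) := by
  have hgeom : Set.EqOn (fun z : 𝕜 => z ^ N / (1 - z)) (fun z => ∑' j, z ^ (N + j)) (ball 0 1) :=
    fun z hz => by
      simp only [pow_add, tsum_mul_left,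
        tsum_geometric_of_norm_lt_one (mem_ball_zero_iff.mp hz), div_eq_mul_inv]
  rw [hgeom.iteratedDeriv_of_isOpen isOpen_ball m (mem_ball_zero_iff.mpr hx),
    iteratedDeriv_tsum_pow_add N m hx]

theorem iteratedDeriv_one_sub_pow_div (N m : ℕ) {x : 𝕜} (hx : ‖1 - x‖ < 1) :
    iteratedDeriv m (fun z : 𝕜 => (1 - z) ^ N / z) x =
      (-1) ^ m * ∑' j, ((N + j).descFactorial m : 𝕜) * (1 - x) ^ (N + j - m) := by
  have h := congr_fun (iteratedDeriv_comp_const_sub m (fun y : 𝕜 => y ^ N / (1 - y)) 1) x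
  simp only [sub_sub_cancel, smul_eq_mul] at h
  rw [h, iteratedDeriv_pow_div_one_sub N m hx]

end GeometricTail

section TermIdentities

variable {K : Type*} [Field K] [CharZero K]

theorem natCast_mul_choose_pred_mul_pow_eq_descFactorial (n L : ℕ) (x : K) :
    (n : K) * (L.choose (n - 1) : K) * x ^ (L + 1 - n) =
      n / (n - 1).factorial * ((L.descFactorial (n - 1) : K) * x ^ (L - (n - 1))) := by
  rcases n with _ | n
  · simp
  rw [Nat.add_sub_cancel, Nat.add_sub_add_right, Nat.descFactorial_eq_factorial_mul_choose]
  have : (n.factorial : K) ≠ 0 := Nat.cast_ne_zero.mpr n.factorial_ne_zero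
  push_cast
  field_simp

theorem natCast_sub_mul_choose_pred_mul_pow_eq_descFactorial (k L : ℕ) (hk : 1 ≤ k) (x : K) :
    ((L + 1 - k : ℕ) : K) * (L.choose (k - 1) : K) * x ^ (L + 1 - k) =
      x / (k - 1).factorial * ((L.descFactorial k : K) * x ^ (L - k)) := by
  obtain ⟨b, rfl⟩ := Nat.exists_eq_add_of_le' hk
  rw [Nat.add_sub_cancel, Nat.add_sub_add_right, Nat.descFactorial_succ,
    Nat.descFactorial_eq_factorial_mul_choose]
  rcases Nat.eq_zero_or_pos (L - b) with hL | hL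
  · simp [hL]
  rw [show L - b = L - (b + 1) + 1 by omega, pow_succ]
  have : (b.factorial : K) ≠ 0 := Nat.cast_ne_zero.mpr b.factorial_ne_zero
  push_cast
  field_simp

end TermIdentities

theorem avgBoys_closed_form_general (n k : ℕ) (hk : 1 ≤ k)
    (p : ℝ) (hp : p ∈ Set.Ioo (0 : ℝ) 1) :
    avgBoys n k p =
      ((n : ℝ) / (Nat.factorial (n - 1) : ℝ)) * p ^ n * (-1 : ℝ) ^ (n - 1) *
        iteratedDeriv (n - 1) (fun q : ℝ => (1 - q) ^ (n + k - 1) / q) p +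
      (p * (1 - p) ^ k / (Nat.factorial (k - 1) : ℝ)) *
        iteratedDeriv k (fun q : ℝ => q ^ (n + k - 1) / (1 - q)) p := by
  obtain ⟨hp0, hp1⟩ := hp
  have hp_norm : ‖p‖ < 1 := by rw [Real.norm_eq_abs, abs_lt]; constructor <;> linarith
  have hq_norm : ‖1 - p‖ < 1 := by rw [Real.norm_eq_abs, abs_lt]; constructor <;> linarith
  have hsign : (-1 : ℝ) ^ (n - 1) * (-1) ^ (n - 1) = 1 := by rw [← mul_pow]; norm_num
  rw [avgBoys, iteratedDeriv_one_sub_pow_div _ _ hq_norm,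
    iteratedDeriv_pow_div_one_sub _ _ hp_norm, mul_assoc _ ((-1) ^ (n - 1)),
    ← mul_assoc ((-1) ^ (n - 1)), hsign, one_mul,
    ← tsum_mul_left, ← tsum_mul_left]
  congr 1 <;> refine tsum_congr fun j => ?_
  · linear_combination
      p ^ n * natCast_mul_choose_pred_mul_pow_eq_descFactorial n (n + k - 1 + j) (1 - p)
  · linear_combination
      (1 - p) ^ k * natCast_sub_mul_choose_pred_mul_pow_eq_descFactorial k (n + k - 1 + j) hk p

/-- Closed form for `B(n,k,p)` in terms of iterated derivatives:
`B(n,k,p) = (n/(n-1)!) p^n (-1)^{n-1} d^{n-1}/dp^{n-1} ((1-p)^{n+k-1}/p)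
          + (p(1-p)^k/(k-1)!) d^k/dp^k (p^{n+k-1}/(1-p))`. -/
theorem avgBoys_closed_form (n k : ℕ) (hn : 1 ≤ n) (hk : 1 ≤ k)
    (p : ℝ) (hp : p ∈ Set.Ioo (0 : ℝ) 1) :
    avgBoys n k p =
      ((n : ℝ) / (Nat.factorial (n - 1) : ℝ)) * p ^ n * (-1 : ℝ) ^ (n - 1) *
        iteratedDeriv (n - 1) (fun q : ℝ => (1 - q) ^ (n + k - 1) / q) p +
      (p * (1 - p) ^ k / (Nat.factorial (k - 1) : ℝ)) *
        iteratedDeriv k (fun q : ℝ => q ^ (n + k - 1) / (1 - q)) p :=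
  avgBoys_closed_form_general n k hk p hp
end

section
/- For every p ∈ (0,1), the average share of girls within families under the Beit Shammai rule, given by the series ḡ_S(p) = Σ_{ℓ=1}^∞ ℓ ((ℓ-1)/(ℓ+1)) p² (1-p)^{ℓ-1}, equals 1 − 2 (p/(1-p)) (1 + (p/(1-p)) ln p). -/
/-- For every `p ∈ (0,1)`, the average share of girls under the Beit Shammai rule,
`ḡ_S(p) = Σ_{ℓ=1}^∞ ℓ ((ℓ-1)/(ℓ+1)) p² (1-p)^{ℓ-1}`,
equals `1 - 2 (p/(1-p)) (1 + (p/(1-p)) ln p)`. -/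
theorem beit_shammai_avg_girls_share (p : ℝ) (hp : p ∈ Set.Ioo (0 : ℝ) 1) :
    (∑' ℓ : ℕ, ((ℓ + 1 : ℕ) : ℝ) * ((((ℓ + 1 : ℕ) : ℝ) - 1) / (((ℓ + 1 : ℕ) : ℝ) + 1)) *
        p ^ 2 * (1 - p) ^ (ℓ + 1 - 1)) =
      1 - 2 * (p / (1 - p)) * (1 + (p / (1 - p)) * Real.log p) := by
  obtain ⟨hp0, hp1⟩ := hp
  set q : ℝ := 1 - p with hqdef
  have hq0 : 0 < q := by simp only [hqdef]; linarith
  have hq1 : q < 1 := by simp only [hqdef]; linarith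
  have hqn : ‖q‖ < 1 := by rw [Real.norm_eq_abs, abs_of_pos hq0]; exact hq1
  have hp0' : p ≠ 0 := ne_of_gt hp0
  have hq0' : q ≠ 0 := ne_of_gt hq0
  have hpq : 1 - q = p := by rw [hqdef]; ring
  -- Σ (n+1) q^n = 1/p²
  have h1 : HasSum (fun n : ℕ => ((n : ℝ) + 1) * q ^ n) (1 / p ^ 2) := by
    have h := (hasSum_coe_mul_geometric_of_norm_lt_one hqn).add
      (hasSum_geometric_of_lt_one hq0.le hq1)
    have hfun : (fun n : ℕ => (n : ℝ) * q ^ n + q ^ n)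
        = fun n : ℕ => ((n : ℝ) + 1) * q ^ n := by funext n; ring
    rw [hfun] at h
    have hval : q / (1 - q) ^ 2 + (1 - q)⁻¹ = 1 / p ^ 2 := by
      rw [hpq, hqdef]; field_simp; ring
    rwa [hval] at h
  -- Σ q^n = 1/p
  have h2 : HasSum (fun n : ℕ => q ^ n) (1 / p) := by
    have h := hasSum_geometric_of_lt_one hq0.le hq1
    rwa [hpq, ← one_div p] at h
  -- Σ q^(n+1)/(n+1) = -log p
  have hlog : HasSum (fun n : ℕ => q ^ (n + 1) / ((n : ℝ) + 1)) (-Real.log p) := by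
    have h := Real.hasSum_pow_div_log_of_abs_lt_one (x := q) (by rwa [abs_of_pos hq0])
    rwa [hpq] at h
  -- shift: Σ q^(n+2)/(n+2) = -log p - q
  have hshift : HasSum (fun n : ℕ => q ^ (n + 1 + 1) / (((n + 1 : ℕ) : ℝ) + 1))
      (-Real.log p - ∑ i ∈ Finset.range 1, q ^ (i + 1) / ((i : ℝ) + 1)) :=
    ((hasSum_nat_add_iff' (f := fun n : ℕ => q ^ (n + 1) / ((n : ℝ) + 1)) 1).mpr hlog)
  have hsum1 : (∑ i ∈ Finset.range 1, q ^ (i + 1) / ((i : ℝ) + 1)) = q := by simp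
  rw [hsum1] at hshift
  -- Σ q^n/(n+2) = (-log p - q)/q²
  have h3 : HasSum (fun n : ℕ => q ^ n / ((n : ℝ) + 2)) ((-Real.log p - q) / q ^ 2) := by
    have h := hshift.mul_left (1 / q ^ 2)
    have hfun : (fun n : ℕ => 1 / q ^ 2 * (q ^ (n + 1 + 1) / (((n + 1 : ℕ) : ℝ) + 1)))
        = fun n : ℕ => q ^ n / ((n : ℝ) + 2) := by
      funext n
      push_cast
      have hn : ((n : ℝ) + 1 + 1) ≠ 0 := by positivity
      field_simp
      ring
    rw [hfun] at h
    have : 1 / q ^ 2 * (-Real.log p - q) = (-Real.log p - q) / q ^ 2 := by ring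
    rwa [this] at h
  -- combine
  have hmain : HasSum
      (fun n : ℕ => p ^ 2 * (((n : ℝ) + 1) * q ^ n) - 2 * p ^ 2 * q ^ n
        + 2 * p ^ 2 * (q ^ n / ((n : ℝ) + 2)))
      (p ^ 2 * (1 / p ^ 2) - 2 * p ^ 2 * (1 / p)
        + 2 * p ^ 2 * ((-Real.log p - q) / q ^ 2)) :=
    ((h1.mul_left (p ^ 2)).sub (h2.mul_left (2 * p ^ 2))).add (h3.mul_left (2 * p ^ 2))
  have hfun : (fun n : ℕ => p ^ 2 * (((n : ℝ) + 1) * q ^ n) - 2 * p ^ 2 * q ^ n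
        + 2 * p ^ 2 * (q ^ n / ((n : ℝ) + 2)))
      = fun ℓ : ℕ => ((ℓ + 1 : ℕ) : ℝ) * ((((ℓ + 1 : ℕ) : ℝ) - 1) / (((ℓ + 1 : ℕ) : ℝ) + 1)) *
        p ^ 2 * q ^ (ℓ + 1 - 1) := by
    funext n
    have hn2 : ((n : ℝ) + 2) ≠ 0 := by positivity
    have hn1 : ((n : ℝ) + 1 + 1) ≠ 0 := by positivity
    push_cast
    field_simp
    ring
  rw [hfun] at hmain
  rw [hmain.tsum_eq]
  field_simp
  ring
end

section
/- The average share of girls under the Beit Shammai rule at p = 1/2 equals 2 ln 2 − 1, i.e. ḡ_S(1/2) = Σ_{ℓ=1}^∞ ℓ ((ℓ-1)/(ℓ+1)) (1/4) (1/2)^{ℓ-1} = 2 ln 2 − 1. -/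
/-!
The partial fraction decomposition `ℓ (ℓ - 1) / (ℓ + 1) = ℓ - 2 + 2 / (ℓ + 1)` splits `ḡ_S(p)` into
two arithmetic-geometric series and a tail of the logarithmic series `∑ xᵏ / k = -ln (1 - x)`
at `x = 1 - p`. This gives `ḡ_S(p) = 1 - 2p - 2p² (ln p + 1 - p) / (1 - p)²`; at `p = 1/2` the
first two terms cancel and `ln (1/2) = -ln 2`.
-/

open Real

theorem hasSum_pow_add_two_div_add_two {x : ℝ} (hx : |x| < 1) :
    HasSum (fun n : ℕ => x ^ (n + 2) / (n + 2)) (-log (1 - x) - x) := by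
  have h := (hasSum_nat_add_iff' 1).mpr (hasSum_pow_div_log_of_abs_lt_one hx)
  norm_num at h
  exact h.congr_fun fun n => by ring_nf

theorem hasSum_add_one_mul_div_add_two_mul_pow {x : ℝ} (hx : |x| < 1) :
    HasSum (fun n : ℕ => (n + 1) * n / (n + 2) * x ^ (n + 2))
      (x ^ 2 * (2 * x - 1) / (1 - x) ^ 2 - 2 * (log (1 - x) + x)) := by
  have hx1 : 1 - x ≠ 0 := by linarith [le_abs_self x]
  have hlin := hasSum_coe_mul_geometric_of_norm_lt_one (r := x) hx
  have hgeom := hasSum_geometric_of_abs_lt_one hx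
  have hlog := hasSum_pow_add_two_div_add_two hx
  have hsum := ((hlin.sub hgeom).mul_left (x ^ 2)).add (hlog.mul_left 2)
  have hval : x ^ 2 * (2 * x - 1) / (1 - x) ^ 2 - 2 * (log (1 - x) + x) =
      x ^ 2 * (x / (1 - x) ^ 2 - (1 - x)⁻¹) + 2 * (-log (1 - x) - x) := by
    field_simp
    ring
  have partial_fractions (n : ℕ) : ((n : ℝ) + 1) * n / (n + 2) = n - 1 + 2 / (n + 2) := by
    field_simp
    ring
  rw [hval]
  exact hsum.congr_fun fun n => by rw [partial_fractions]; ring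

/-- Families of `ℓ + 1` children with girl share `(ℓ - 1) / (ℓ + 1)`: there are `ℓ` birth orders
(the last child is the second boy), each of probability `p² (1 - p)^(ℓ - 1)`. -/
noncomputable def beitShammaiGirlsTerm (p : ℝ) (ℓ : ℕ) : ℝ :=
  ℓ * ((ℓ - 1) / (ℓ + 1)) * p ^ 2 * (1 - p) ^ (ℓ - 1)

theorem hasSum_beitShammaiGirlsTerm {p : ℝ} (hp₀ : 0 < p) (hp₁ : p < 1) :
    HasSum (fun ℓ => beitShammaiGirlsTerm p (ℓ + 1))
      (1 - 2 * p - 2 * p ^ 2 * (log p + 1 - p) / (1 - p) ^ 2) := by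
  have hq : |1 - p| < 1 := by rw [abs_lt]; constructor <;> linarith
  have hq0 : 1 - p ≠ 0 := by linarith
  have hsum := (hasSum_add_one_mul_div_add_two_mul_pow hq).mul_left (p ^ 2 / (1 - p) ^ 2)
  rw [sub_sub_cancel] at hsum
  have hval : 1 - 2 * p - 2 * p ^ 2 * (log p + 1 - p) / (1 - p) ^ 2 =
      p ^ 2 / (1 - p) ^ 2 *
        ((1 - p) ^ 2 * (2 * (1 - p) - 1) / p ^ 2 - 2 * (log p + (1 - p))) := by
    field_simp
    ring
  rw [hval]
  refine hsum.congr_fun fun ℓ => ?_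
  rw [beitShammaiGirlsTerm, Nat.add_sub_cancel]
  field_simp
  push_cast
  ring

/-- The average share of girls under the Beit Shammai rule at `p = 1/2` equals `2 ln 2 - 1`:
`ḡ_S(1/2) = Σ_{ℓ=1}^∞ ℓ ((ℓ-1)/(ℓ+1)) (1/4) (1/2)^{ℓ-1} = 2 ln 2 - 1`. -/
theorem beit_shammai_avg_girls_share_half :
    (∑' ℓ : ℕ, ((ℓ + 1 : ℕ) : ℝ) * ((((ℓ + 1 : ℕ) : ℝ) - 1) / (((ℓ + 1 : ℕ) : ℝ) + 1)) *
        (1 / 4 : ℝ) * (1 / 2 : ℝ) ^ (ℓ + 1 - 1)) =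
      2 * Real.log 2 - 1 := by
  have h := (hasSum_beitShammaiGirlsTerm (p := 1 / 2) (by norm_num) (by norm_num)).tsum_eq
  rw [one_div 2, Real.log_inv] at h
  simp only [beitShammaiGirlsTerm] at h
  norm_num at h ⊢
  rw [h]
  ring
end

section
/- For all p ∈ (0,1), the average share of girls under the Beit Shammai rule is strictly below the girls' birth probability: ḡ_S(p) = 1 − 2 (p/(1-p)) (1 + (p/(1-p)) ln p) < 1 − p. -/
/-! After clearing denominators the claim becomes `(p - p⁻¹) / 2 < log p` on `(0, 1)`.
Since `(p - p⁻¹) / 2 = sinh (log p)`, this is `sinh x < x` for `x = log p < 0`. -/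

open Real

lemma Real.sub_inv_div_two_lt_log {p : ℝ} (h0 : 0 < p) (h1 : p < 1) :
    (p - p⁻¹) / 2 < log p := by
  rw [← sinh_log h0]
  exact sinh_lt_self_iff.mpr (log_neg h0 h1)

/-- For all `p ∈ (0,1)`, the average share of girls under the Beit Shammai rule is strictly
below the girls' birth probability:
`ḡ_S(p) = 1 - 2 (p/(1-p)) (1 + (p/(1-p)) ln p) < 1 - p`. -/
theorem beit_shammai_avg_share_lt_birth_probability (p : ℝ) (hp : p ∈ Set.Ioo (0 : ℝ) 1) :
    1 - 2 * (p / (1 - p)) * (1 + (p / (1 - p)) * Real.log p) < 1 - p := by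
  obtain ⟨h0, h1⟩ := hp
  have hq : 0 < 1 - p := sub_pos.mpr h1
  have hlog : p ^ 2 - 1 < 2 * p * log p := by
    have h := mul_lt_mul_of_pos_left (sub_inv_div_two_lt_log h0 h1) (mul_pos two_pos h0)
    field_simp at h
    linarith
  have hsplit : 2 * (p / (1 - p)) * (1 + p / (1 - p) * log p)
      = (2 * p * (1 - p) + 2 * p ^ 2 * log p) / (1 - p) ^ 2 := by
    field_simp
  rw [sub_lt_sub_iff_left, hsplit, lt_div_iff₀ (by positivity)]
  nlinarith [mul_lt_mul_of_pos_left hlog h0]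
end
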